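/- arXiv:1901.02062 — 8 statements merged into one kernel-verified Lean document; each statement's English description precedes it below -/
import Mathlib

section
/- In a monomial model with a linear θ̃_i-covariation scheme (setting θ_k to γ_k θ̃_i + δ_k for k ∈ S_j∖{i}, with coefficients chosen so the varied parameters in S_j sum to one), the sensitivity function σ(P)(E), viewed as a function of θ̃_i, is a polynomial in θ̃_i of degree at most max_{y∈E} |A_{y,S_j}|, and this bound is attained for proportional and uniform covariation when the leading coefficients do not cancel. -/
/-! Substituting the covariation scheme turns every monomial `∏ θ_k ^ A_{y,k}` into
`θ̃ᵢ ^ A_{y,i}` times a product of `A_{y,k}` affine factors in `θ̃ᵢ` (`k ∈ S_j ∖ {i}`) times a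
constant, hence into a polynomial of degree at most `|A_{y,S_j}|`. Summing over `y ∈ E` bounds the
degree by the maximum, and a nonzero coefficient at that maximum forces equality. -/

open Finset Polynomial

namespace Polynomial

variable {R : Type*} [CommSemiring R]

theorem natDegree_prod_linear_pow_le {ι : Type*} (s : Finset ι) (a b : ι → R) (n : ι → ℕ) :
    (∏ j ∈ s, (C (a j) * X + C (b j)) ^ n j).natDegree ≤ ∑ j ∈ s, n j :=
  (natDegree_prod_le _ _).trans <| sum_le_sum fun _ _ =>
    (natDegree_pow_le_of_le _ natDegree_linear_le).trans (mul_one _).le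

end Polynomial

section Sensitivity

variable {R Y ι : Type*} [CommSemiring R] [Fintype ι] [DecidableEq ι]

noncomputable def sensitivityPolynomial (A : Y → ι → ℕ) (θ γ δ : ι → R) (S : Finset ι) (i₀ : ι)
    (E : Finset Y) : R[X] :=
  ∑ y ∈ E, C (∏ i ∈ Sᶜ, θ i ^ A y i) *
    (X ^ A y i₀ * ∏ j ∈ S.erase i₀, (C (γ j) * X + C (δ j)) ^ A y j)

variable (A : Y → ι → ℕ) (θ γ δ : ι → R) (S : Finset ι) (i₀ : ι) (E : Finset Y)

theorem eval_sensitivityPolynomial (t : R) :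
    (sensitivityPolynomial A θ γ δ S i₀ E).eval t =
      ∑ y ∈ E, t ^ A y i₀ * (∏ j ∈ S.erase i₀, (γ j * t + δ j) ^ A y j) *
        ∏ i ∈ Sᶜ, θ i ^ A y i := by
  simp only [sensitivityPolynomial, eval_finsetSum, eval_mul, eval_C, eval_pow, eval_X,
    eval_prod, eval_add]
  exact sum_congr rfl fun y _ => mul_comm _ _

theorem natDegree_sensitivityPolynomial_le (hi₀ : i₀ ∈ S) :
    (sensitivityPolynomial A θ γ δ S i₀ E).natDegree ≤ E.sup fun y => ∑ j ∈ S, A y j := by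
  refine natDegree_sum_le_of_forall_le _ _ fun y hy => ?_
  have hterm : (X ^ A y i₀ * ∏ j ∈ S.erase i₀, (C (γ j) * X + C (δ j)) ^ A y j : R[X]).natDegree
      ≤ ∑ j ∈ S, A y j := by
    rw [← add_sum_erase _ _ hi₀]
    exact natDegree_mul_le_of_le (natDegree_X_pow_le _) (natDegree_prod_linear_pow_le _ _ _ _)
  exact (natDegree_C_mul_le _ _).trans <| hterm.trans <| le_sup (f := fun y => ∑ j ∈ S, A y j) hy

end Sensitivity

theorem stmt_3_general {Y : Type*} {k : ℕ}
    (A : Y → Fin k → ℕ) (θ : Fin k → ℝ) (Sj : Finset (Fin k))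
    (i₀ : Fin k) (hi₀ : i₀ ∈ Sj)
    (γ δ : Fin k → ℝ)
    (E : Finset Y) :
    ∃ p : Polynomial ℝ,
      (∀ t : ℝ,
        ∑ y ∈ E, t ^ A y i₀ * (∏ j ∈ Sj.erase i₀, (γ j * t + δ j) ^ A y j)
            * ∏ i ∈ Sjᶜ, θ i ^ A y i
          = p.eval t)
      ∧ p.natDegree ≤ E.sup (fun y => ∑ j ∈ Sj, A y j)
      ∧ (p.coeff (E.sup (fun y => ∑ j ∈ Sj, A y j)) ≠ 0
          → p.natDegree = E.sup (fun y => ∑ j ∈ Sj, A y j)) := by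
  have hdeg := natDegree_sensitivityPolynomial_le A θ γ δ Sj i₀ E hi₀
  exact ⟨sensitivityPolynomial A θ γ δ Sj i₀ E,
    fun t => (eval_sensitivityPolynomial A θ γ δ Sj i₀ E t).symm, hdeg,
    natDegree_eq_of_le_of_coeff_ne_zero hdeg⟩

/-- Under a linear covariation scheme the sensitivity function is a polynomial in
`θ̃ᵢ` of degree at most `max_{y∈E} |A_{y,S_j}|`, the bound being attained whenever
the leading coefficient does not cancel. -/
theorem stmt_3 {Y : Type*} [Fintype Y] {k : ℕ}
    (A : Y → Fin k → ℕ) (θ : Fin k → ℝ) (Sj : Finset (Fin k))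
    (hθpos : ∀ i, 0 < θ i) (hsum : ∑ i ∈ Sj, θ i = 1)
    (i₀ : Fin k) (hi₀ : i₀ ∈ Sj)
    (γ δ : Fin k → ℝ)
    (hsum' : ∀ t : ℝ, t + ∑ j ∈ Sj.erase i₀, (γ j * t + δ j) = 1)
    (E : Finset Y) :
    ∃ p : Polynomial ℝ,
      (∀ t : ℝ,
        ∑ y ∈ E, t ^ A y i₀ * (∏ j ∈ Sj.erase i₀, (γ j * t + δ j) ^ A y j)
            * ∏ i ∈ Sjᶜ, θ i ^ A y i
          = p.eval t)
      ∧ p.natDegree ≤ E.sup (fun y => ∑ j ∈ Sj, A y j)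
      ∧ (p.coeff (E.sup (fun y => ∑ j ∈ Sj, A y j)) ≠ 0
          → p.natDegree = E.sup (fun y => ∑ j ∈ Sj, A y j)) :=
  stmt_3_general A θ Sj i₀ hi₀ γ δ E
end

section
/- In a monomial model, suppose |A_{y,S_j}| ≤ 1 for all y ∈ Y^{≠}_{S_j}, and suppose that for every index i ∈ S_j there exists an atom y with A_{y,i} = 1 and A_{y,k} = 0 for all other k ∈ S_j. Then for any θ̃_i-covariation scheme σ acting on S_j, the CD distance equals D_CD(σ(P),P) = log max_{i∈S_j} θ̃_i/θ_i − log min_{i∈S_j} θ̃_i/θ_i, i.e., it coincides with the CD distance between the single probability vectors θ̃_{S_j} and θ_{S_j}. -/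
open Finset

/-!
Off `S_j` the two parameter vectors agree, so the likelihood ratio of an atom `y` is
`∏_{i ∈ S_j} (θ̃_i/θ_i)^{A_{y,i}}`. Since the `S_j`-exponents of `y` sum to at most one, this
ratio is either `1` or a single `θ̃_i/θ_i`, and by the realizability hypothesis every
`θ̃_i/θ_i` occurs. Both vectors sum to one, so some `θ̃_i/θ_i` is `≥ 1` and some is `≤ 1`;
hence the value `1` changes neither the maximum nor the minimum of the ratios.
-/

section Lattice

variable {α Y ι : Type*} [Lattice α] {s : Finset Y} {t : Finset ι} {f : Y → α} {g : ι → α} {c : α}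

theorem Finset.sup'_eq_sup'_of_eq_or_exists (hs : s.Nonempty) (ht : t.Nonempty)
    (hf : ∀ y ∈ s, f y = c ∨ ∃ i ∈ t, f y = g i) (hg : ∀ i ∈ t, ∃ y ∈ s, f y = g i)
    (hc : c ≤ t.sup' ht g) : s.sup' hs f = t.sup' ht g := by
  refine le_antisymm (sup'_le _ _ fun y hy => ?_) (sup'_le _ _ fun i hi => ?_)
  · obtain h | ⟨i, hi, h⟩ := hf y hy
    · exact h ▸ hc
    · exact h ▸ le_sup' g hi
  · obtain ⟨y, hy, h⟩ := hg i hi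
    exact h ▸ le_sup' f hy

theorem Finset.inf'_eq_inf'_of_eq_or_exists (hs : s.Nonempty) (ht : t.Nonempty)
    (hf : ∀ y ∈ s, f y = c ∨ ∃ i ∈ t, f y = g i) (hg : ∀ i ∈ t, ∃ y ∈ s, f y = g i)
    (hc : t.inf' ht g ≤ c) : s.inf' hs f = t.inf' ht g :=
  Finset.sup'_eq_sup'_of_eq_or_exists (α := αᵒᵈ) hs ht hf hg hc

end Lattice

section Field

variable {K ι : Type*} [Field K] [LinearOrder K] [IsStrictOrderedRing K]
  {s : Finset ι} {θ θ' : ι → K}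

theorem one_le_sup'_div_of_sum_le (hs : s.Nonempty) (hθ : ∀ i ∈ s, 0 < θ i)
    (h : ∑ i ∈ s, θ i ≤ ∑ i ∈ s, θ' i) : 1 ≤ s.sup' hs (fun i => θ' i / θ i) := by
  obtain ⟨i, hi, hle⟩ := exists_le_of_sum_le hs h
  exact ((one_le_div₀ (hθ i hi)).mpr hle).trans (le_sup' (fun i => θ' i / θ i) hi)

theorem inf'_div_le_one_of_sum_le (hs : s.Nonempty) (hθ : ∀ i ∈ s, 0 < θ i)
    (h : ∑ i ∈ s, θ' i ≤ ∑ i ∈ s, θ i) : s.inf' hs (fun i => θ' i / θ i) ≤ 1 := by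
  obtain ⟨i, hi, hle⟩ := exists_le_of_sum_le hs h
  exact (inf'_le (fun i => θ' i / θ i) hi).trans ((div_le_one₀ (hθ i hi)).mpr hle)

end Field

section Monomial

variable {ι M : Type*} {s : Finset ι} {a : ι → ℕ}

theorem prod_pow_div_prod_pow_eq_prod_div_pow [Fintype ι] [CommGroupWithZero M] {θ θ' : ι → M}
    (hθ : ∀ i ∉ s, θ i ≠ 0) (hfix : ∀ i ∉ s, θ' i = θ i) :
    (∏ i, θ' i ^ a i) / ∏ i, θ i ^ a i = ∏ i ∈ s, (θ' i / θ i) ^ a i := by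
  rw [← prod_div_distrib]
  simp_rw [← div_pow]
  refine (prod_subset (subset_univ s) fun i _ hi => ?_).symm
  rw [hfix i hi, div_self (hθ i hi), one_pow]

theorem prod_pow_eq_of_eq_one_of_eq_zero [CommMonoid M] {g : ι → M} {i : ι} (hi : i ∈ s)
    (hai : a i = 1) (ha : ∀ j ∈ s, j ≠ i → a j = 0) : ∏ j ∈ s, g j ^ a j = g i := by
  rw [prod_eq_single_of_mem i hi fun j hj hji => by rw [ha j hj hji, pow_zero], hai, pow_one]

theorem prod_pow_eq_one_or_exists_of_sum_le_one [CommMonoid M] (g : ι → M)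
    (ha : ∑ i ∈ s, a i ≤ 1) : ∏ i ∈ s, g i ^ a i = 1 ∨ ∃ i ∈ s, ∏ j ∈ s, g j ^ a j = g i := by
  by_cases! h : ∃ i ∈ s, a i ≠ 0
  · obtain ⟨i, hi, hai⟩ := h
    have hsingle := sum_le_one_iff.mp ha
    refine .inr ⟨i, hi, prod_pow_eq_of_eq_one_of_eq_zero hi (hsingle i i hi hi hai hai).2
      fun j hj hji => ?_⟩
    by_contra haj
    exact hji (hsingle j i hj hi haj hai).1
  · exact .inl (prod_eq_one fun i hi => by rw [h i hi, pow_zero])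

end Monomial

theorem stmt_7_general {Y : Type*} [Fintype Y] [Nonempty Y] {k : ℕ}
    (A : Y → Fin k → ℕ) (θ θ' : Fin k → ℝ) (Sj : Finset (Fin k))
    (hSj : Sj.Nonempty)
    (hθpos : ∀ i, 0 < θ i)
    (hsum : ∑ i ∈ Sj, θ i = 1) (hsum' : ∑ i ∈ Sj, θ' i = 1)
    (hfix : ∀ i ∉ Sj, θ' i = θ i)
    (hA1 : ∀ y : Y, (∃ i ∈ Sj, A y i ≠ 0) → ∑ j ∈ Sj, A y j ≤ 1)
    (hreal : ∀ i ∈ Sj, ∃ y : Y, A y i = 1 ∧ ∀ j ∈ Sj, j ≠ i → A y j = 0) :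
    Real.log (Finset.univ.sup' Finset.univ_nonempty
        (fun y => (∏ i, θ' i ^ A y i) / ∏ i, θ i ^ A y i))
      - Real.log (Finset.univ.inf' Finset.univ_nonempty
        (fun y => (∏ i, θ' i ^ A y i) / ∏ i, θ i ^ A y i))
    = Real.log (Sj.sup' hSj (fun i => θ' i / θ i))
      - Real.log (Sj.inf' hSj (fun i => θ' i / θ i)) := by
  have hratio (y : Y) : (∏ i, θ' i ^ A y i) / ∏ i, θ i ^ A y i
      = ∏ i ∈ Sj, (θ' i / θ i) ^ A y i :=
    prod_pow_div_prod_pow_eq_prod_div_pow (fun i _ => (hθpos i).ne') hfix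
  have hsum_le_one (y : Y) : ∑ j ∈ Sj, A y j ≤ 1 := by
    by_cases! h : ∃ i ∈ Sj, A y i ≠ 0
    · exact hA1 y h
    · simp [sum_eq_zero h]
  have hvalues : ∀ y ∈ univ, (∏ i, θ' i ^ A y i) / ∏ i, θ i ^ A y i = 1 ∨
      ∃ j ∈ Sj, (∏ i, θ' i ^ A y i) / ∏ i, θ i ^ A y i = θ' j / θ j := fun y _ =>
    hratio y ▸ prod_pow_eq_one_or_exists_of_sum_le_one _ (hsum_le_one y)
  have hrealized : ∀ j ∈ Sj, ∃ y ∈ univ,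
      (∏ i, θ' i ^ A y i) / ∏ i, θ i ^ A y i = θ' j / θ j := fun j hj => by
    obtain ⟨y, hyj, hy⟩ := hreal j hj
    exact ⟨y, mem_univ y, (hratio y).trans (prod_pow_eq_of_eq_one_of_eq_zero hj hyj hy)⟩
  have hθpos' : ∀ i ∈ Sj, 0 < θ i := fun i _ => hθpos i
  rw [sup'_eq_sup'_of_eq_or_exists _ hSj hvalues hrealized
      (one_le_sup'_div_of_sum_le hSj hθpos' (hsum.trans hsum'.symm).le),
    inf'_eq_inf'_of_eq_or_exists _ hSj hvalues hrealized
      (inf'_div_le_one_of_sum_le hSj hθpos' (hsum'.trans hsum.symm).le)]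

/-- If every atom has total `S_j`-exponent at most one and every index of `S_j` is
realized as the sole `S_j`-exponent of some atom, then the CD distance between the
varied and original distributions equals the CD distance between the probability
vectors `θ̃_{S_j}` and `θ_{S_j}`. -/
theorem stmt_7 {Y : Type*} [Fintype Y] [Nonempty Y] {k : ℕ}
    (A : Y → Fin k → ℕ) (θ θ' : Fin k → ℝ) (Sj : Finset (Fin k))
    (hSj : Sj.Nonempty)
    (hθpos : ∀ i, 0 < θ i) (hθ'pos : ∀ i, 0 < θ' i)
    (hsum : ∑ i ∈ Sj, θ i = 1) (hsum' : ∑ i ∈ Sj, θ' i = 1)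
    (hfix : ∀ i ∉ Sj, θ' i = θ i)
    (hA1 : ∀ y : Y, (∃ i ∈ Sj, A y i ≠ 0) → ∑ j ∈ Sj, A y j ≤ 1)
    (hreal : ∀ i ∈ Sj, ∃ y : Y, A y i = 1 ∧ ∀ j ∈ Sj, j ≠ i → A y j = 0) :
    Real.log (Finset.univ.sup' Finset.univ_nonempty
        (fun y => (∏ i, θ' i ^ A y i) / ∏ i, θ i ^ A y i))
      - Real.log (Finset.univ.inf' Finset.univ_nonempty
        (fun y => (∏ i, θ' i ^ A y i) / ∏ i, θ i ^ A y i))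
    = Real.log (Sj.sup' hSj (fun i => θ' i / θ i))
      - Real.log (Sj.inf' hSj (fun i => θ' i / θ i)) :=
  stmt_7_general A θ θ' Sj hSj hθpos hsum hsum' hfix hA1 hreal
end

section
/- Under the hypotheses that |A_{y,S_j}| ≤ 1 for all y ∈ Y^{≠}_{S_j} and each parameter index in S_j is realized as the sole S_j-exponent of some atom, the CD distance under proportional covariation of θ_i to θ̃_i equals |log(θ̃_i/θ_i) − log((1−θ̃_i)/(1−θ_i))|. -/
open Finset

/-- Under the structural hypotheses of Corollary 4, the CD distance under proportional
covariation equals `|log(θ̃ᵢ/θᵢ) − log((1−θ̃ᵢ)/(1−θᵢ))|`. -/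
theorem stmt_8 {Y : Type*} [Fintype Y] [Nonempty Y] {k : ℕ}
    (A : Y → Fin k → ℕ) (θ θ' : Fin k → ℝ) (Sj : Finset (Fin k))
    (hθpos : ∀ i, 0 < θ i) (hθ1 : ∀ i, θ i < 1)
    (hsum : ∑ i ∈ Sj, θ i = 1)
    (i₀ : Fin k) (hi₀ : i₀ ∈ Sj)
    (t : ℝ) (ht : 0 < t) (ht1 : t < 1)
    (h1 : θ' i₀ = t)
    (h2 : ∀ j ∈ Sj.erase i₀, θ' j = θ j * ((1 - t) / (1 - θ i₀)))
    (h3 : ∀ i ∉ Sj, θ' i = θ i)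
    (hA1 : ∀ y : Y, (∃ i ∈ Sj, A y i ≠ 0) → ∑ j ∈ Sj, A y j ≤ 1)
    (hreal : ∀ i ∈ Sj, ∃ y : Y, A y i = 1 ∧ ∀ j ∈ Sj, j ≠ i → A y j = 0) :
    Real.log (Finset.univ.sup' Finset.univ_nonempty
        (fun y => (∏ i, θ' i ^ A y i) / ∏ i, θ i ^ A y i))
      - Real.log (Finset.univ.inf' Finset.univ_nonempty
        (fun y => (∏ i, θ' i ^ A y i) / ∏ i, θ i ^ A y i))
    = |Real.log (t / θ i₀) - Real.log ((1 - t) / (1 - θ i₀))| := by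
  have hθi₀ := hθpos i₀
  have hθi₀1 := hθ1 i₀
  have hθne : ∀ i, θ i ≠ 0 := fun i => (hθpos i).ne'
  have h1θ : (0:ℝ) < 1 - θ i₀ := by linarith
  set a := t / θ i₀ with ha_def
  set b := (1 - t) / (1 - θ i₀) with hb_def
  have ha : 0 < a := div_pos ht hθi₀
  have hb : 0 < b := div_pos (by linarith) h1θ
  set f : Y → ℝ := fun y => (∏ i, θ' i ^ A y i) / ∏ i, θ i ^ A y i with hf
  have hcompute : ∀ (y : Y) (i : Fin k), i ∈ Sj → A y i = 1 →
      (∀ j ∈ Sj, j ≠ i → A y j = 0) → f y = θ' i / θ i := by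
    intro y i hiS hAi1 hA0
    have hprod : f y = ∏ j, (θ' j / θ j) ^ A y j := by
      simp [hf, div_pow, Finset.prod_div_distrib]
    rw [hprod, Finset.prod_eq_single i]
    · rw [hAi1, pow_one]
    · intro j _ hji
      by_cases hj : j ∈ Sj
      · rw [hA0 j hj hji, pow_zero]
      · rw [h3 j hj, div_self (hθne j), one_pow]
    · intro h; exact absurd (Finset.mem_univ i) h
  have hratio : ∀ i ∈ Sj, θ' i / θ i = if i = i₀ then a else b := by
    intro i hiS
    by_cases hii : i = i₀
    · subst hii; rw [if_pos rfl, h1]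
    · rw [if_neg hii, h2 i (Finset.mem_erase.mpr ⟨hii, hiS⟩),
        mul_div_cancel_left₀ _ (hθne i)]
  have hfval : ∀ y, f y = 1 ∨ f y = a ∨ f y = b := by
    intro y
    by_cases hz : ∀ i ∈ Sj, A y i = 0
    · left
      have hprod : f y = ∏ j, (θ' j / θ j) ^ A y j := by
        simp [hf, div_pow, Finset.prod_div_distrib]
      rw [hprod]
      apply Finset.prod_eq_one
      intro j _
      by_cases hj : j ∈ Sj
      · rw [hz j hj, pow_zero]
      · rw [h3 j hj, div_self (hθne j), one_pow]
    · right
      push_neg at hz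
      obtain ⟨i, hiS, hiA⟩ := hz
      have hle : A y i ≤ ∑ j ∈ Sj, A y j :=
        Finset.single_le_sum (fun _ _ => Nat.zero_le _) hiS
      have hsum1 : ∑ j ∈ Sj, A y j = 1 := by
        have := hA1 y ⟨i, hiS, hiA⟩
        omega
      have hAi1 : A y i = 1 := by omega
      have hA0 : ∀ j ∈ Sj, j ≠ i → A y j = 0 := by
        intro j hjS hji
        have herase : ∑ l ∈ Sj.erase i, A y l = 0 := by
          have := Finset.add_sum_erase Sj (A y) hiS
          omega
        exact Finset.sum_eq_zero_iff.mp herase j (Finset.mem_erase.mpr ⟨hji, hjS⟩)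
      rw [hcompute y i hiS hAi1 hA0, hratio i hiS]
      by_cases hii : i = i₀
      · left; rw [if_pos hii]
      · right; rw [if_neg hii]
  obtain ⟨ya, hya1, hya0⟩ := hreal i₀ hi₀
  have hfa : f ya = a := by rw [hcompute ya i₀ hi₀ hya1 hya0, h1]
  obtain ⟨j₁, hj₁S, hj₁ne⟩ : ∃ j ∈ Sj, j ≠ i₀ := by
    by_contra h
    push_neg at h
    have hs : Sj = {i₀} :=
      Finset.eq_singleton_iff_unique_mem.mpr ⟨hi₀, fun x hx => h x hx⟩
    rw [hs, Finset.sum_singleton] at hsum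
    linarith
  obtain ⟨yb, hyb1, hyb0⟩ := hreal j₁ hj₁S
  have hfb : f yb = b := by
    rw [hcompute yb j₁ hj₁S hyb1 hyb0, hratio j₁ hj₁S, if_neg hj₁ne]
  have hone : min a b ≤ 1 ∧ 1 ≤ max a b := by
    rcases le_total t (θ i₀) with h | h
    · constructor
      · exact le_trans (min_le_left _ _) ((div_le_one hθi₀).mpr h)
      · exact le_trans ((one_le_div h1θ).mpr (by linarith)) (le_max_right _ _)
    · constructor
      · exact le_trans (min_le_right _ _) ((div_le_one h1θ).mpr (by linarith))
      · exact le_trans ((one_le_div hθi₀).mpr h) (le_max_left _ _)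
  have hsup : Finset.univ.sup' Finset.univ_nonempty f = max a b := by
    apply le_antisymm
    · apply Finset.sup'_le
      intro y _
      rcases hfval y with h | h | h
      · rw [h]; exact hone.2
      · rw [h]; exact le_max_left _ _
      · rw [h]; exact le_max_right _ _
    · rcases le_total a b with h | h
      · rw [max_eq_right h]; exact hfb ▸ Finset.le_sup' f (Finset.mem_univ yb)
      · rw [max_eq_left h]; exact hfa ▸ Finset.le_sup' f (Finset.mem_univ ya)
  have hinf : Finset.univ.inf' Finset.univ_nonempty f = min a b := by
    apply le_antisymm
    · rcases le_total a b with h | h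
      · rw [min_eq_left h]; exact hfa ▸ Finset.inf'_le f (Finset.mem_univ ya)
      · rw [min_eq_right h]; exact hfb ▸ Finset.inf'_le f (Finset.mem_univ yb)
    · apply Finset.le_inf'
      intro y _
      rcases hfval y with h | h | h
      · rw [h]; exact hone.1
      · rw [h]; exact min_le_left _ _
      · rw [h]; exact min_le_right _ _
  rw [hsup, hinf]
  rcases le_total a b with h | h
  · rw [max_eq_right h, min_eq_left h,
      abs_of_nonpos (by
        have := Real.log_le_log ha h
        linarith)]
    ring
  · rw [max_eq_left h, min_eq_right h,
      abs_of_nonneg (by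
        have := Real.log_le_log hb h
        linarith)]
end

section
/- Under the hypotheses that |A_{y,S_j}| ≤ 1 for all y ∈ Y^{≠}_{S_j} and each index in S_j appears as sole S_j-exponent of some atom, proportional covariation minimizes the CD distance between the original and varied monomial model distributions among all θ̃_i-covariation schemes: for any covariation scheme σ fixing θ_i = θ̃_i and producing a strictly positive probability vector on S_j, D_CD(σ_pro(P),P) ≤ D_CD(σ(P),P). -/
open Finset

lemma key_supinf {Y : Type*} [Fintype Y] [Nonempty Y] {k : ℕ}
    (A : Y → Fin k → ℕ) (θ θt : Fin k → ℝ) (Sj : Finset (Fin k))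
    (hθpos : ∀ i, 0 < θ i) (htpos : ∀ i, 0 < θt i)
    (hsum : ∑ i ∈ Sj, θ i = 1) (htsum : ∑ i ∈ Sj, θt i = 1)
    (hteq : ∀ i ∉ Sj, θt i = θ i)
    (hA1 : ∀ y : Y, (∃ i ∈ Sj, A y i ≠ 0) → ∑ j ∈ Sj, A y j ≤ 1)
    (hreal : ∀ i ∈ Sj, ∃ y : Y, A y i = 1 ∧ ∀ j ∈ Sj, j ≠ i → A y j = 0)
    (hS : Sj.Nonempty) :
    univ.sup' univ_nonempty (fun y => (∏ i, θt i ^ A y i) / ∏ i, θ i ^ A y i)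
      = Sj.sup' hS (fun i => θt i / θ i)
    ∧ univ.inf' univ_nonempty (fun y => (∏ i, θt i ^ A y i) / ∏ i, θ i ^ A y i)
      = Sj.inf' hS (fun i => θt i / θ i) := by
  have hf : ∀ y, (∏ i, θt i ^ A y i) / ∏ i, θ i ^ A y i
      = ∏ i ∈ Sj, (θt i / θ i) ^ A y i := by
    intro y
    rw [← Finset.prod_div_distrib]
    simp_rw [← div_pow]
    exact (Finset.prod_subset (Finset.subset_univ Sj) (by
      intro x _ hx
      rw [hteq x hx, div_self (hθpos x).ne', one_pow])).symm
  have hcases : ∀ y : Y, (∏ i ∈ Sj, (θt i / θ i) ^ A y i = 1) ∨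
      ∃ i ∈ Sj, ∏ i' ∈ Sj, (θt i' / θ i') ^ A y i' = θt i / θ i := by
    intro y
    by_cases h : ∃ i ∈ Sj, A y i ≠ 0
    · obtain ⟨i, hi, hne⟩ := h
      right
      refine ⟨i, hi, ?_⟩
      have hsum1 := hA1 y ⟨i, hi, hne⟩
      have h1 : 1 ≤ A y i := Nat.one_le_iff_ne_zero.mpr hne
      have hAj : ∀ j ∈ Sj, j ≠ i → A y j = 0 := by
        intro j hj hji
        have hkey := Finset.add_sum_erase Sj (A y) hi
        have h3 : A y j ≤ ∑ l ∈ Sj.erase i, A y l :=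
          Finset.single_le_sum (fun _ _ => Nat.zero_le _) (Finset.mem_erase.mpr ⟨hji, hj⟩)
        omega
      have hAi : A y i = 1 := by
        have h2 := Finset.single_le_sum (f := A y) (fun j _ => Nat.zero_le _) hi
        omega
      rw [Finset.prod_eq_single_of_mem i hi
        (fun b hb hbi => by rw [hAj b hb hbi, pow_zero]), hAi, pow_one]
    · left
      push_neg at h
      exact Finset.prod_eq_one (fun j hj => by rw [h j hj, pow_zero])
  have hge : ∃ i ∈ Sj, θ i ≤ θt i := by
    by_contra h
    push_neg at h
    have := Finset.sum_lt_sum_of_nonempty hS h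
    rw [htsum, hsum] at this
    exact lt_irrefl 1 this
  have hle : ∃ i ∈ Sj, θt i ≤ θ i := by
    by_contra h
    push_neg at h
    have := Finset.sum_lt_sum_of_nonempty hS h
    rw [htsum, hsum] at this
    exact lt_irrefl 1 this
  have hone_le_sup : (1 : ℝ) ≤ Sj.sup' hS (fun i => θt i / θ i) := by
    obtain ⟨i, hi, h⟩ := hge
    exact le_trans ((one_le_div (hθpos i)).mpr h) (Finset.le_sup' (fun i => θt i / θ i) hi)
  have hinf_le_one : Sj.inf' hS (fun i => θt i / θ i) ≤ 1 := by
    obtain ⟨i, hi, h⟩ := hle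
    exact le_trans (Finset.inf'_le (fun i => θt i / θ i) hi) ((div_le_one (hθpos i)).mpr h)
  have hfreal : ∀ i ∈ Sj, ∃ y : Y,
      (∏ l, θt l ^ A y l) / ∏ l, θ l ^ A y l = θt i / θ i := by
    intro i hi
    obtain ⟨y, hy1, hy0⟩ := hreal i hi
    refine ⟨y, ?_⟩
    rw [hf y, Finset.prod_eq_single_of_mem i hi
      (fun b hb hbi => by rw [hy0 b hb hbi, pow_zero]), hy1, pow_one]
  constructor
  · apply le_antisymm
    · apply Finset.sup'_le
      intro y _
      rw [hf y]
      rcases hcases y with h1 | ⟨i, hi, hEq⟩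
      · rw [h1]; exact hone_le_sup
      · rw [hEq]; exact Finset.le_sup' (fun i => θt i / θ i) hi
    · apply Finset.sup'_le
      intro i hi
      obtain ⟨y, hy⟩ := hfreal i hi
      calc θt i / θ i = _ := hy.symm
        _ ≤ _ := Finset.le_sup' (fun y => (∏ i, θt i ^ A y i) / ∏ i, θ i ^ A y i) (Finset.mem_univ y)
  · apply le_antisymm
    · apply Finset.le_inf'
      intro i hi
      obtain ⟨y, hy⟩ := hfreal i hi
      calc _ ≤ _ := Finset.inf'_le (fun y => (∏ i, θt i ^ A y i) / ∏ i, θ i ^ A y i) (Finset.mem_univ y)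
        _ = θt i / θ i := hy
    · apply Finset.le_inf'
      intro y _
      rw [hf y]
      rcases hcases y with h1 | ⟨i, hi, hEq⟩
      · rw [h1]; exact hinf_le_one
      · rw [hEq]; exact Finset.inf'_le (fun i => θt i / θ i) hi
/-- Under the structural hypotheses of Corollary 4, proportional covariation minimizes
the CD distance between the original and the varied distribution among all
`θ̃ᵢ`-covariation schemes. -/
theorem stmt_9 {Y : Type*} [Fintype Y] [Nonempty Y] {k : ℕ}
    (A : Y → Fin k → ℕ) (θ : Fin k → ℝ) (Sj : Finset (Fin k))
    (hθpos : ∀ i, 0 < θ i) (hθ1 : ∀ i, θ i < 1)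
    (hsum : ∑ i ∈ Sj, θ i = 1)
    (i₀ : Fin k) (hi₀ : i₀ ∈ Sj)
    (t : ℝ) (ht : 0 < t) (ht1 : t < 1)
    (hA1 : ∀ y : Y, (∃ i ∈ Sj, A y i ≠ 0) → ∑ j ∈ Sj, A y j ≤ 1)
    (hreal : ∀ i ∈ Sj, ∃ y : Y, A y i = 1 ∧ ∀ j ∈ Sj, j ≠ i → A y j = 0)
    -- the proportional covariation scheme
    (θpro : Fin k → ℝ)
    (hp1 : θpro i₀ = t)
    (hp2 : ∀ j ∈ Sj.erase i₀, θpro j = θ j * ((1 - t) / (1 - θ i₀)))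
    (hp3 : ∀ i ∉ Sj, θpro i = θ i)
    -- an arbitrary θ̃ᵢ-covariation scheme
    (θ' : Fin k → ℝ)
    (h'pos : ∀ i, 0 < θ' i) (h'sum : ∑ i ∈ Sj, θ' i = 1)
    (h'1 : θ' i₀ = t) (h'3 : ∀ i ∉ Sj, θ' i = θ i) :
    Real.log (Finset.univ.sup' Finset.univ_nonempty
        (fun y => (∏ i, θpro i ^ A y i) / ∏ i, θ i ^ A y i))
      - Real.log (Finset.univ.inf' Finset.univ_nonempty
        (fun y => (∏ i, θpro i ^ A y i) / ∏ i, θ i ^ A y i))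
    ≤ Real.log (Finset.univ.sup' Finset.univ_nonempty
        (fun y => (∏ i, θ' i ^ A y i) / ∏ i, θ i ^ A y i))
      - Real.log (Finset.univ.inf' Finset.univ_nonempty
        (fun y => (∏ i, θ' i ^ A y i) / ∏ i, θ i ^ A y i)) := by
  have hSne : Sj.Nonempty := ⟨i₀, hi₀⟩
  have h1θ0 : 0 < 1 - θ i₀ := by linarith [hθ1 i₀]
  have hesum : ∑ j ∈ Sj.erase i₀, θ j = 1 - θ i₀ := by
    have h := Finset.add_sum_erase Sj θ hi₀
    linarith
  have h'esum : ∑ j ∈ Sj.erase i₀, θ' j = 1 - t := by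
    have h := Finset.add_sum_erase Sj θ' hi₀
    rw [h'1] at h
    linarith
  have hc : (1 - θ i₀) * ((1 - t) / (1 - θ i₀)) = 1 - t := by
    field_simp
  have hppos : ∀ i, 0 < θpro i := by
    intro i
    by_cases hi : i ∈ Sj
    · by_cases h : i = i₀
      · rw [h, hp1]; exact ht
      · rw [hp2 i (Finset.mem_erase.mpr ⟨h, hi⟩)]
        exact mul_pos (hθpos i) (div_pos (by linarith) h1θ0)
    · rw [hp3 i hi]; exact hθpos i
  have hpsum : ∑ i ∈ Sj, θpro i = 1 := by
    rw [← Finset.add_sum_erase Sj θpro hi₀, hp1,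
      Finset.sum_congr rfl hp2, ← Finset.sum_mul, hesum, hc]
    ring
  obtain ⟨hsupP, hinfP⟩ := key_supinf A θ θpro Sj hθpos hppos hsum hpsum hp3 hA1 hreal hSne
  obtain ⟨hsupQ, hinfQ⟩ := key_supinf A θ θ' Sj hθpos h'pos hsum h'sum h'3 hA1 hreal hSne
  rw [hsupP, hinfP, hsupQ, hinfQ]
  have hrpos : ∀ i ∈ Sj, 0 < θpro i / θ i := fun i _ => div_pos (hppos i) (hθpos i)
  have hr'pos : ∀ i ∈ Sj, 0 < θ' i / θ i := fun i _ => div_pos (h'pos i) (hθpos i)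
  have hsupPpos : 0 < Sj.sup' hSne (fun i => θpro i / θ i) :=
    lt_of_lt_of_le (hrpos i₀ hi₀) (Finset.le_sup' (fun i => θpro i / θ i) hi₀)
  have hinfQpos : 0 < Sj.inf' hSne (fun i => θ' i / θ i) :=
    (Finset.lt_inf'_iff hSne).mpr hr'pos
  have hsup : Sj.sup' hSne (fun i => θpro i / θ i) ≤ Sj.sup' hSne (fun i => θ' i / θ i) := by
    apply Finset.sup'_le
    intro i hi
    by_cases h : i = i₀
    · subst h
      rw [hp1, ← h'1]
      exact Finset.le_sup' (fun i => θ' i / θ i) hi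
    · have hie : i ∈ Sj.erase i₀ := Finset.mem_erase.mpr ⟨h, hi⟩
      rw [hp2 i hie, mul_comm, mul_div_assoc, div_self (hθpos i).ne', mul_one]
      by_contra hcon
      push_neg at hcon
      have hlt : ∀ j ∈ Sj.erase i₀, θ' j < θ j * ((1 - t) / (1 - θ i₀)) := by
        intro j hj
        have hj' : θ' j / θ j ≤ Sj.sup' hSne (fun i => θ' i / θ i) :=
          Finset.le_sup' (fun i => θ' i / θ i) (Finset.mem_of_mem_erase hj)
        have h2 := lt_of_le_of_lt hj' hcon
        rw [div_lt_iff₀ (hθpos j)] at h2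
        linarith
      have hlt2 := Finset.sum_lt_sum_of_nonempty ⟨i, hie⟩ hlt
      rw [h'esum, ← Finset.sum_mul, hesum, hc] at hlt2
      exact lt_irrefl _ hlt2
  have hinf : Sj.inf' hSne (fun i => θ' i / θ i) ≤ Sj.inf' hSne (fun i => θpro i / θ i) := by
    apply Finset.le_inf'
    intro i hi
    by_cases h : i = i₀
    · subst h
      rw [hp1, ← h'1]
      exact Finset.inf'_le (fun i => θ' i / θ i) hi
    · have hie : i ∈ Sj.erase i₀ := Finset.mem_erase.mpr ⟨h, hi⟩
      rw [hp2 i hie, mul_comm, mul_div_assoc, div_self (hθpos i).ne', mul_one]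
      by_contra hcon
      push_neg at hcon
      have hlt : ∀ j ∈ Sj.erase i₀, θ j * ((1 - t) / (1 - θ i₀)) < θ' j := by
        intro j hj
        have hj' : Sj.inf' hSne (fun i => θ' i / θ i) ≤ θ' j / θ j :=
          Finset.inf'_le (fun i => θ' i / θ i) (Finset.mem_of_mem_erase hj)
        have h2 := lt_of_lt_of_le hcon hj'
        rw [lt_div_iff₀ (hθpos j)] at h2
        linarith
      have hlt2 := Finset.sum_lt_sum_of_nonempty ⟨i, hie⟩ hlt
      rw [h'esum, ← Finset.sum_mul, hesum, hc] at hlt2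
      exact lt_irrefl _ hlt2
  exact sub_le_sub (Real.log_le_log hsupPpos hsup) (Real.log_le_log hinfQpos hinf)
end

section
/- For two strictly positive probability vectors p and p̃ on a finite set with n ≥ 2 elements, where p̃ is obtained from p by fixing p̃_i = t ∈ (0,1) for some index i, the choice p̃_k = p_k(1−t)/(1−p_i) for k ≠ i minimizes D(p̃,p) = log max_k p̃_k/p_k − log min_k p̃_k/p_k among all strictly positive probability vectors p̃ with p̃_i = t, and achieves the value |log(t/p_i) − log((1−t)/(1−p_i))|. -/
open Finset

/-!
The ratios `p̃ₖ / pₖ` of the proportional completion take only two values: `a = t / pᵢ` at `i`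
and `b = (1 - t) / (1 - pᵢ)` everywhere else, so its distance is `|log a - log b|`. Any competitor
`q` with `qᵢ = t` still has the ratio `a` at `i`, and it spreads the mass `1 - t` over weights of
total mass `1 - pᵢ`; averaging forces some ratio `qₖ / pₖ` with `k ≠ i` to be `≥ b` and another
to be `≤ b`. Hence the largest ratio of `q` is at least `max a b` and its smallest at most
`min a b`.
-/

lemma Real.log_max_sub_log_min {a b : ℝ} (ha : 0 < a) (hb : 0 < b) :
    Real.log (max a b) - Real.log (min a b) = |Real.log a - Real.log b| := by
  rcases le_total a b with h | h
  · rw [max_eq_right h, min_eq_left h, abs_sub_comm, abs_of_nonneg]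
    exact sub_nonneg.mpr (Real.log_le_log ha h)
  · rw [max_eq_left h, min_eq_right h, abs_of_nonneg]
    exact sub_nonneg.mpr (Real.log_le_log hb h)

section TwoValued

variable {ι α : Type*} [Fintype ι] [Nonempty ι] [LinearOrder α] {f : ι → α} {i j : ι} {b : α}

lemma univ_sup'_eq_max_of_eq_off (hji : j ≠ i) (hf : ∀ k, k ≠ i → f k = b) :
    univ.sup' univ_nonempty f = max (f i) b := by
  refine le_antisymm (sup'_le _ _ fun k _ => ?_) (max_le (le_sup' f (mem_univ i)) ?_)
  · by_cases hk : k = i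
    · exact hk ▸ le_max_left _ _
    · exact hf k hk ▸ le_max_right _ _
  · exact hf j hji ▸ le_sup' f (mem_univ j)

lemma univ_inf'_eq_min_of_eq_off (hji : j ≠ i) (hf : ∀ k, k ≠ i → f k = b) :
    univ.inf' univ_nonempty f = min (f i) b := by
  refine le_antisymm (le_min (inf'_le f (mem_univ i)) ?_) (le_inf' _ _ fun k _ => ?_)
  · exact hf j hji ▸ inf'_le f (mem_univ j)
  · by_cases hk : k = i
    · exact hk ▸ min_le_left _ _
    · exact hf k hk ▸ min_le_right _ _

end TwoValued

section MassBalance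

variable {ι : Type*} {s : Finset ι} {p q : ι → ℝ} {c : ℝ}

lemma exists_le_div_of_mul_sum_le (hs : s.Nonempty) (hp : ∀ j ∈ s, 0 < p j)
    (h : c * ∑ j ∈ s, p j ≤ ∑ j ∈ s, q j) : ∃ j ∈ s, c ≤ q j / p j := by
  rw [mul_sum] at h
  obtain ⟨j, hj, hle⟩ := exists_le_of_sum_le hs h
  exact ⟨j, hj, (le_div_iff₀' (hp j hj)).2 (by rwa [mul_comm])⟩

lemma exists_div_le_of_sum_le_mul (hs : s.Nonempty) (hp : ∀ j ∈ s, 0 < p j)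
    (h : ∑ j ∈ s, q j ≤ c * ∑ j ∈ s, p j) : ∃ j ∈ s, q j / p j ≤ c := by
  rw [mul_sum] at h
  obtain ⟨j, hj, hle⟩ := exists_le_of_sum_le hs h
  exact ⟨j, hj, (div_le_iff₀' (hp j hj)).2 (by rwa [mul_comm])⟩

end MassBalance

section ProbabilityVectors

variable {ι : Type*} [Fintype ι] {p q : ι → ℝ} {i j : ι}

lemma lt_one_of_sum_eq_one (hp : ∀ k, 0 < p k) (hpsum : ∑ k, p k = 1) (hji : j ≠ i) :
    p i < 1 :=
  hpsum ▸ single_lt_sum hji (mem_univ i) (mem_univ j) (hp j) fun k _ _ => (hp k).le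

variable [DecidableEq ι]

lemma sum_erase_eq_mul_sum_erase (hp : ∀ k, 0 < p k) (hpsum : ∑ k, p k = 1)
    (hqsum : ∑ k, q k = 1) (hji : j ≠ i) :
    (1 - q i) / (1 - p i) * ∑ k ∈ univ.erase i, p k = ∑ k ∈ univ.erase i, q k := by
  have hpi : 1 - p i ≠ 0 := (sub_pos.2 (lt_one_of_sum_eq_one hp hpsum hji)).ne'
  rw [sum_erase_eq_sub (mem_univ i), sum_erase_eq_sub (mem_univ i), hpsum, hqsum,
    div_mul_cancel₀ _ hpi]

variable [Nonempty ι]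

lemma le_univ_sup'_div (hp : ∀ k, 0 < p k) (hpsum : ∑ k, p k = 1) (hqsum : ∑ k, q k = 1)
    (hji : j ≠ i) :
    (1 - q i) / (1 - p i) ≤ univ.sup' univ_nonempty (fun k => q k / p k) := by
  obtain ⟨k, -, hk⟩ := exists_le_div_of_mul_sum_le ⟨j, mem_erase.2 ⟨hji, mem_univ j⟩⟩
    (fun k _ => hp k) (sum_erase_eq_mul_sum_erase hp hpsum hqsum hji).le
  exact le_sup'_of_le _ (mem_univ k) hk

lemma univ_inf'_div_le (hp : ∀ k, 0 < p k) (hpsum : ∑ k, p k = 1) (hqsum : ∑ k, q k = 1)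
    (hji : j ≠ i) :
    univ.inf' univ_nonempty (fun k => q k / p k) ≤ (1 - q i) / (1 - p i) := by
  obtain ⟨k, -, hk⟩ := exists_div_le_of_sum_le_mul ⟨j, mem_erase.2 ⟨hji, mem_univ j⟩⟩
    (fun k _ => hp k) (sum_erase_eq_mul_sum_erase hp hpsum hqsum hji).ge
  exact inf'_le_of_le _ (mem_univ k) hk

end ProbabilityVectors

/-- Chan–Darwiche optimality of proportional scaling for a single probability vector:
fixing the `i`-th entry to `t`, the proportional completion minimizes the CD distance
and achieves the value `|log(t/pᵢ) − log((1−t)/(1−pᵢ))|`. -/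
theorem stmt_10 {n : ℕ} (p : Fin (n + 2) → ℝ)
    (hp : ∀ j, 0 < p j) (hpsum : ∑ j, p j = 1)
    (i : Fin (n + 2)) (t : ℝ) (ht : 0 < t) (ht1 : t < 1)
    (ppro : Fin (n + 2) → ℝ)
    (h1 : ppro i = t)
    (h2 : ∀ j, j ≠ i → ppro j = p j * ((1 - t) / (1 - p i))) :
    (Real.log (Finset.univ.sup' Finset.univ_nonempty (fun j => ppro j / p j))
        - Real.log (Finset.univ.inf' Finset.univ_nonempty (fun j => ppro j / p j))
      = |Real.log (t / p i) - Real.log ((1 - t) / (1 - p i))|)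
    ∧ ∀ q : Fin (n + 2) → ℝ, (∀ j, 0 < q j) → ∑ j, q j = 1 → q i = t →
      Real.log (Finset.univ.sup' Finset.univ_nonempty (fun j => ppro j / p j))
          - Real.log (Finset.univ.inf' Finset.univ_nonempty (fun j => ppro j / p j))
        ≤ Real.log (Finset.univ.sup' Finset.univ_nonempty (fun j => q j / p j))
          - Real.log (Finset.univ.inf' Finset.univ_nonempty (fun j => q j / p j)) := by
  obtain ⟨j, hji⟩ := exists_ne i
  set b := (1 - t) / (1 - p i)
  have hb : 0 < b := div_pos (sub_pos.2 ht1) (sub_pos.2 (lt_one_of_sum_eq_one hp hpsum hji))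
  have hratio : ∀ k, k ≠ i → ppro k / p k = b := fun k hk => by
    rw [h2 k hk, mul_div_cancel_left₀ _ (hp k).ne']
  have hsup := univ_sup'_eq_max_of_eq_off hji hratio
  have hinf := univ_inf'_eq_min_of_eq_off hji hratio
  rw [h1] at hsup hinf
  refine ⟨by rw [hsup, hinf, Real.log_max_sub_log_min (div_pos ht (hp i)) hb], ?_⟩
  intro q hq hqsum hqi
  set r := fun k => q k / p k
  have hqb : (1 - q i) / (1 - p i) = b := by rw [hqi]
  have hmax : max (t / p i) b ≤ univ.sup' univ_nonempty r :=
    max_le (hqi ▸ le_sup' r (mem_univ i)) (hqb ▸ le_univ_sup'_div hp hpsum hqsum hji)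
  have hmin : univ.inf' univ_nonempty r ≤ min (t / p i) b :=
    le_min (hqi ▸ inf'_le r (mem_univ i)) (hqb ▸ univ_inf'_div_le hp hpsum hqsum hji)
  have hinf_pos : 0 < univ.inf' univ_nonempty r :=
    (lt_inf'_iff _).2 fun k _ => div_pos (hq k) (hp k)
  rw [hsup, hinf]
  linarith [Real.log_le_log (lt_max_of_lt_right hb) hmax, Real.log_le_log hinf_pos hmin]
end

section
/- In a monomial model where the exponent matrix A has all entries in {0,1} (a multilinear model), for any θ̃_i-covariation scheme the sensitivity function σ(P)(E) under any linear covariation scheme is an affine function of θ̃_i, provided each atom's monomial contains at most one parameter from each block S_j (as holds when the rows restricted to S_j sum to at most 1). -/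
open Finset Polynomial

/-!
Read the sensitivity function as a polynomial in `t = θ̃ᵢ`. The atom `y` contributes the
product of the covaried parameters of its block raised to the exponents `A y j`, times a
constant; each covaried parameter is affine in `t`, so this product has degree at most
`∑_{j ∈ S_j} A y j ≤ 1`. A sum of polynomials of degree at most one is affine.
-/

namespace Polynomial

variable {R : Type*} [CommSemiring R]

theorem exists_eval_eq_mul_add_of_natDegree_le_one {p : R[X]} (hp : p.natDegree ≤ 1) :
    ∃ a b : R, ∀ t, p.eval t = a * t + b :=
  ⟨p.coeff 1, p.coeff 0, fun t => by
    conv_lhs => rw [eq_X_add_C_of_natDegree_le_one hp]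
    simp⟩

theorem natDegree_prod_pow_le_sum_of_natDegree_le_one {ι : Type*} (s : Finset ι)
    (p : ι → R[X]) (n : ι → ℕ) (hp : ∀ j ∈ s, (p j).natDegree ≤ 1) :
    (∏ j ∈ s, p j ^ n j).natDegree ≤ ∑ j ∈ s, n j :=
  (natDegree_prod_le _ _).trans <| sum_le_sum fun j hj =>
    natDegree_pow_le.trans <| by simpa using Nat.mul_le_mul_left (n j) (hp j hj)

theorem natDegree_covariedMonomial_le_one {ι : Type*} [DecidableEq ι] {s : Finset ι} {i₀ : ι}
    (hi₀ : i₀ ∈ s) (n : ι → ℕ) (hn : ∑ j ∈ s, n j ≤ 1) (γ δ : ι → R) (c : R) :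
    (X ^ n i₀ * (∏ j ∈ s.erase i₀, (C (γ j) * X + C (δ j)) ^ n j) * C c).natDegree ≤ 1 := by
  have hprod := natDegree_prod_pow_le_sum_of_natDegree_le_one (s.erase i₀)
    (fun j => C (γ j) * X + C (δ j)) n fun _ _ => natDegree_linear_le
  calc _ ≤ (X ^ n i₀ * ∏ j ∈ s.erase i₀, (C (γ j) * X + C (δ j)) ^ n j).natDegree :=
        natDegree_mul_C_le _ _
    _ ≤ n i₀ + ∑ j ∈ s.erase i₀, n j :=
        natDegree_mul_le.trans (add_le_add (natDegree_X_pow_le _) hprod)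
    _ = ∑ j ∈ s, n j := add_sum_erase s n hi₀
    _ ≤ 1 := hn

end Polynomial

theorem stmt_13_general {Y : Type*} {k : ℕ}
    (A : Y → Fin k → ℕ) (θ : Fin k → ℝ) (Sj : Finset (Fin k))
    (hrow : ∀ y : Y, ∑ j ∈ Sj, A y j ≤ 1)
    (i₀ : Fin k) (hi₀ : i₀ ∈ Sj)
    (γ δ : Fin k → ℝ)
    (E : Finset Y) :
    ∃ a b : ℝ, ∀ t : ℝ,
      ∑ y ∈ E, t ^ A y i₀ * (∏ j ∈ Sj.erase i₀, (γ j * t + δ j) ^ A y j)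
          * ∏ i ∈ Sjᶜ, θ i ^ A y i
        = a * t + b := by
  obtain ⟨a, b, hab⟩ := exists_eval_eq_mul_add_of_natDegree_le_one
    (p := ∑ y ∈ E, X ^ A y i₀ * (∏ j ∈ Sj.erase i₀, (C (γ j) * X + C (δ j)) ^ A y j)
      * C (∏ i ∈ Sjᶜ, θ i ^ A y i))
    (natDegree_sum_le_of_forall_le _ _ fun y _ =>
      natDegree_covariedMonomial_le_one hi₀ (A y) (hrow y) γ δ _)
  exact ⟨a, b, fun t => by simpa [eval_finsetSum, eval_prod] using hab t⟩

/-- In a multilinear monomial model (all exponents in `{0,1}`) where each atom uses at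
most one parameter from the varied block `S_j`, the sensitivity function under any
linear covariation scheme is an affine function of `θ̃ᵢ`. -/
theorem stmt_13 {Y : Type*} [Fintype Y] {k : ℕ}
    (A : Y → Fin k → ℕ) (θ : Fin k → ℝ) (Sj : Finset (Fin k))
    (hθpos : ∀ i, 0 < θ i) (hsum : ∑ i ∈ Sj, θ i = 1)
    (hbin : ∀ (y : Y) (i : Fin k), A y i ≤ 1)
    (hrow : ∀ y : Y, ∑ j ∈ Sj, A y j ≤ 1)
    (i₀ : Fin k) (hi₀ : i₀ ∈ Sj)
    (γ δ : Fin k → ℝ)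
    (hsum' : ∀ t : ℝ, t + ∑ j ∈ Sj.erase i₀, (γ j * t + δ j) = 1)
    (E : Finset Y) :
    ∃ a b : ℝ, ∀ t : ℝ,
      ∑ y ∈ E, t ^ A y i₀ * (∏ j ∈ Sj.erase i₀, (γ j * t + δ j) ^ A y j)
          * ∏ i ∈ Sjᶜ, θ i ^ A y i
        = a * t + b :=
  stmt_13_general A θ Sj hrow i₀ hi₀ γ δ E
end

section
/- The CD distance is a pseudometric satisfying the triangle inequality on strictly positive probability distributions over a finite set: D_CD(P,P) = 0, D_CD(P,Q) = D_CD(Q,P), and D_CD(P,R) ≤ D_CD(P,Q) + D_CD(Q,R), and D_CD(P,Q) = 0 if and only if P = Q. -/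
/-!
Everything is read off the ratio `P / Q`. Swapping `P` and `Q` inverts the ratio, which exchanges
its maximum and minimum and negates their logarithms. Since `P / R = (P / Q) * (Q / R)`, the
maximum of `P / R` is at most the product of the maxima and its minimum at least the product of
the minima, which after taking logarithms is the triangle inequality. If the distance vanishes,
the ratio is a constant `c`, and `∑ P = c * ∑ Q` forces `c = 1`.
-/

open Finset

/-- The Chan–Darwiche distance between strictly positive distributions on a finite set. -/
noncomputable def CDdist {Y : Type*} [Fintype Y] [Nonempty Y] (P Q : Y → ℝ) : ℝ :=
  Real.log (Finset.univ.sup' Finset.univ_nonempty (fun y => P y / Q y))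
    - Real.log (Finset.univ.inf' Finset.univ_nonempty (fun y => P y / Q y))

namespace Finset

variable {ι α : Type*} {s : Finset ι} (hs : s.Nonempty)

theorem inf'_pos [LinearOrder α] [Zero α] {f : ι → α} (hf : ∀ i ∈ s, 0 < f i) :
    0 < s.inf' hs f :=
  (lt_inf'_iff hs).2 hf

theorem sup'_pos [Lattice α] [Zero α] {f : ι → α} (hf : ∀ i ∈ s, 0 < f i) : 0 < s.sup' hs f :=
  (hf _ hs.choose_spec).trans_le (le_sup' f hs.choose_spec)

theorem sup'_inv_of_pos [Field α] [LinearOrder α] [IsStrictOrderedRing α] {f : ι → α}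
    (hf : ∀ i ∈ s, 0 < f i) : s.sup' hs (fun i => (f i)⁻¹) = (s.inf' hs f)⁻¹ := by
  refine le_antisymm (sup'_le _ _ fun i hi => inv_anti₀ (inf'_pos hs hf) (inf'_le f hi)) ?_
  obtain ⟨i, hi, hfi⟩ := exists_mem_eq_inf' hs f
  rw [hfi]
  exact le_sup' (fun i => (f i)⁻¹) hi

theorem inf'_inv_of_pos [Field α] [LinearOrder α] [IsStrictOrderedRing α] {f : ι → α}
    (hf : ∀ i ∈ s, 0 < f i) : s.inf' hs (fun i => (f i)⁻¹) = (s.sup' hs f)⁻¹ := by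
  refine le_antisymm ?_ (le_inf' _ _ fun i hi => inv_anti₀ (hf i hi) (le_sup' f hi))
  obtain ⟨i, hi, hfi⟩ := exists_mem_eq_sup' hs f
  rw [hfi]
  exact inf'_le (fun i => (f i)⁻¹) hi

theorem eq_sup'_of_sup'_eq_inf' [Lattice α] {f : ι → α} (h : s.sup' hs f = s.inf' hs f)
    {i : ι} (hi : i ∈ s) : f i = s.sup' hs f :=
  le_antisymm (le_sup' f hi) (h ▸ inf'_le f hi)

end Finset

theorem eq_of_div_eq_const_of_sum_eq {ι K : Type*} [Fintype ι] [Field K] {P Q : ι → K} {c : K}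
    (hQ : ∀ i, Q i ≠ 0) (hQs : ∑ i, Q i ≠ 0) (hc : ∀ i, P i / Q i = c)
    (hsum : ∑ i, P i = ∑ i, Q i) : P = Q := by
  have hP : ∀ i, P i = c * Q i := fun i => by rw [← hc i, div_mul_cancel₀ _ (hQ i)]
  have hc1 : c = 1 := by
    rw [Finset.sum_congr rfl fun i _ => hP i, ← Finset.mul_sum] at hsum
    exact (mul_eq_right₀ hQs).1 hsum
  funext i
  rw [hP i, hc1, one_mul]

theorem div_fun_eq_div_mul_div {Y G₀ : Type*} [GroupWithZero G₀] {P Q R : Y → G₀}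
    (hQ : ∀ y, Q y ≠ 0) :
    (fun y => P y / R y) = (fun y => P y / Q y) * fun y => Q y / R y :=
  funext fun y => (div_mul_div_cancel₀ (hQ y)).symm

section CDdist

variable {Y : Type*} [Fintype Y] [Nonempty Y] {P Q R : Y → ℝ}

theorem CDdist_self (hP : ∀ y, P y ≠ 0) : CDdist P P = 0 := by
  simp only [CDdist, div_self (hP _), sup'_const, inf'_const, sub_self]

theorem CDdist_comm (hP : ∀ y, 0 < P y) (hQ : ∀ y, 0 < Q y) : CDdist P Q = CDdist Q P := by
  have hPQ : ∀ y ∈ univ, 0 < P y / Q y := fun y _ => div_pos (hP y) (hQ y)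
  simp only [CDdist, ← inv_div (P _), sup'_inv_of_pos _ hPQ, inf'_inv_of_pos _ hPQ, Real.log_inv]
  ring

theorem log_sup'_div_le_add (hP : ∀ y, 0 < P y) (hQ : ∀ y, 0 < Q y) (hR : ∀ y, 0 < R y) :
    Real.log (univ.sup' univ_nonempty fun y => P y / R y)
      ≤ Real.log (univ.sup' univ_nonempty fun y => P y / Q y)
        + Real.log (univ.sup' univ_nonempty fun y => Q y / R y) := by
  have hPQ : ∀ y ∈ univ, 0 < P y / Q y := fun y _ => div_pos (hP y) (hQ y)
  have hQR : ∀ y ∈ univ, 0 < Q y / R y := fun y _ => div_pos (hQ y) (hR y)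
  rw [← Real.log_mul (sup'_pos _ hPQ).ne' (sup'_pos _ hQR).ne']
  refine Real.log_le_log (sup'_pos _ fun y _ => div_pos (hP y) (hR y)) ?_
  rw [div_fun_eq_div_mul_div fun y => (hQ y).ne']
  exact sup'_mul_le_mul_sup'_of_nonneg (fun y hy => (hPQ y hy).le) (fun y hy => (hQR y hy).le) _

theorem add_log_inf'_div_le (hP : ∀ y, 0 < P y) (hQ : ∀ y, 0 < Q y) (hR : ∀ y, 0 < R y) :
    Real.log (univ.inf' univ_nonempty fun y => P y / Q y)
        + Real.log (univ.inf' univ_nonempty fun y => Q y / R y)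
      ≤ Real.log (univ.inf' univ_nonempty fun y => P y / R y) := by
  have hPQ : ∀ y ∈ univ, 0 < P y / Q y := fun y _ => div_pos (hP y) (hQ y)
  have hQR : ∀ y ∈ univ, 0 < Q y / R y := fun y _ => div_pos (hQ y) (hR y)
  rw [← Real.log_mul (inf'_pos _ hPQ).ne' (inf'_pos _ hQR).ne']
  refine Real.log_le_log (mul_pos (inf'_pos _ hPQ) (inf'_pos _ hQR)) ?_
  rw [div_fun_eq_div_mul_div (P := P) (R := R) fun y => (hQ y).ne']
  exact inf'_mul_le_mul_inf'_of_nonneg (fun y hy => (hPQ y hy).le) (fun y hy => (hQR y hy).le) _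

theorem CDdist_triangle (hP : ∀ y, 0 < P y) (hQ : ∀ y, 0 < Q y) (hR : ∀ y, 0 < R y) :
    CDdist P R ≤ CDdist P Q + CDdist Q R := by
  have := log_sup'_div_le_add hP hQ hR
  have := add_log_inf'_div_le hP hQ hR
  simp only [CDdist]
  linarith

theorem CDdist_eq_zero_iff (hP : ∀ y, 0 < P y) (hQ : ∀ y, 0 < Q y)
    (hsum : ∑ y, P y = ∑ y, Q y) : CDdist P Q = 0 ↔ P = Q := by
  refine ⟨fun h => ?_, fun h => h ▸ CDdist_self fun y => (hP y).ne'⟩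
  have hPQ : ∀ y ∈ univ, 0 < P y / Q y := fun y _ => div_pos (hP y) (hQ y)
  have hext : univ.sup' univ_nonempty (fun y => P y / Q y) = univ.inf' univ_nonempty _ :=
    Real.log_injOn_pos (sup'_pos _ hPQ) (inf'_pos _ hPQ) (sub_eq_zero.1 h)
  exact eq_of_div_eq_const_of_sum_eq (fun y => (hQ y).ne')
    (sum_pos (fun y _ => hQ y) univ_nonempty).ne'
    (fun y => eq_sup'_of_sup'_eq_inf' univ_nonempty hext (mem_univ y)) hsum

end CDdist

theorem stmt_15_general {Y : Type*} [Fintype Y] [Nonempty Y] (P Q R : Y → ℝ)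
    (hP : ∀ y, 0 < P y) (hQ : ∀ y, 0 < Q y) (hR : ∀ y, 0 < R y)
    (hPs : ∑ y, P y = 1) (hQs : ∑ y, Q y = 1) :
    CDdist P P = 0 ∧ CDdist P Q = CDdist Q P
      ∧ CDdist P R ≤ CDdist P Q + CDdist Q R
      ∧ (CDdist P Q = 0 ↔ P = Q) :=
  ⟨CDdist_self fun y => (hP y).ne', CDdist_comm hP hQ, CDdist_triangle hP hQ hR,
    CDdist_eq_zero_iff hP hQ (hPs.trans hQs.symm)⟩

/-- The CD distance is a symmetric pseudometric on strictly positive probability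
distributions which vanishes exactly on equal distributions. -/
theorem stmt_15 {Y : Type*} [Fintype Y] [Nonempty Y] (P Q R : Y → ℝ)
    (hP : ∀ y, 0 < P y) (hQ : ∀ y, 0 < Q y) (hR : ∀ y, 0 < R y)
    (hPs : ∑ y, P y = 1) (hQs : ∑ y, Q y = 1) (hRs : ∑ y, R y = 1) :
    CDdist P P = 0 ∧ CDdist P Q = CDdist Q P
      ∧ CDdist P R ≤ CDdist P Q + CDdist Q R
      ∧ (CDdist P Q = 0 ↔ P = Q) :=
  stmt_15_general P Q R hP hQ hR hPs hQs
end

section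
/- In a monomial model, the conditional sensitivity function σ(P)(E | C) = σ(P)(E ∩ C)/σ(P)(C) under a linear covariation scheme is a ratio of two polynomials in θ̃_i, of degrees at most max_{y∈E∩C}|A_{y,S_j}| and max_{y∈C}|A_{y,S_j}| respectively; in particular if |A_{y,S_j}| ≤ 1 for all y ∈ C, it is a ratio of two affine functions of θ̃_i. -/
open Finset Polynomial

private lemma aux_poly {Y : Type*} [DecidableEq Y] {k : ℕ}
    (A : Y → Fin k → ℕ) (θ : Fin k → ℝ) (Sj : Finset (Fin k))
    (i₀ : Fin k) (hi₀ : i₀ ∈ Sj) (γ δ : Fin k → ℝ) (F : Finset Y) :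
    ∃ p : Polynomial ℝ,
      p.natDegree ≤ F.sup (fun y => ∑ j ∈ Sj, A y j) ∧
      ∀ t : ℝ, (∑ y ∈ F, t ^ A y i₀ * (∏ j ∈ Sj.erase i₀, (γ j * t + δ j) ^ A y j)
              * ∏ i ∈ Sjᶜ, θ i ^ A y i) = p.eval t := by
  refine ⟨∑ y ∈ F, (X ^ A y i₀ * ∏ j ∈ Sj.erase i₀, (C (γ j) * X + C (δ j)) ^ A y j)
      * C (∏ i ∈ Sjᶜ, θ i ^ A y i), ?_, ?_⟩
  · refine natDegree_sum_le_of_forall_le _ _ fun y hy => le_trans ?_ (le_sup hy)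
    calc ((X ^ A y i₀ * ∏ j ∈ Sj.erase i₀, (C (γ j) * X + C (δ j)) ^ A y j)
        * C (∏ i ∈ Sjᶜ, θ i ^ A y i)).natDegree
        ≤ (X ^ A y i₀ * ∏ j ∈ Sj.erase i₀, (C (γ j) * X + C (δ j)) ^ A y j).natDegree
          + (C (∏ i ∈ Sjᶜ, θ i ^ A y i) : ℝ[X]).natDegree := natDegree_mul_le
      _ ≤ (X ^ A y i₀ * ∏ j ∈ Sj.erase i₀, (C (γ j) * X + C (δ j)) ^ A y j).natDegree := by
          simp only [natDegree_C, Nat.add_zero, le_refl]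
      _ ≤ (X ^ A y i₀ : ℝ[X]).natDegree
          + (∏ j ∈ Sj.erase i₀, (C (γ j) * X + C (δ j)) ^ A y j).natDegree := natDegree_mul_le
      _ ≤ A y i₀ + ∑ j ∈ Sj.erase i₀, A y j := by
          gcongr
          · exact le_of_eq (natDegree_X_pow _)
          · refine le_trans (natDegree_prod_le _ _) (Finset.sum_le_sum fun j _ => ?_)
            refine le_trans (natDegree_pow_le) ?_
            have h1 : (C (γ j) * X + C (δ j) : ℝ[X]).natDegree ≤ 1 := by
              refine le_trans (natDegree_add_le _ _) ?_
              simp [natDegree_C]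
              exact le_trans natDegree_mul_le (by simp)
            calc A y j * (C (γ j) * X + C (δ j) : ℝ[X]).natDegree
                ≤ A y j * 1 := by exact Nat.mul_le_mul_left _ h1
              _ = A y j := Nat.mul_one _
      _ = ∑ j ∈ Sj, A y j := Finset.add_sum_erase _ _ hi₀
  · intro t
    simp [eval_finset_sum, eval_prod]

/-- Under a linear covariation scheme the conditional sensitivity function
`σ(P)(E | C) = σ(P)(E∩C)/σ(P)(C)` is a ratio of two polynomials in `θ̃ᵢ` of degrees
at most `max_{y∈E∩C}|A_{y,S_j}|` and `max_{y∈C}|A_{y,S_j}|` respectively. -/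
theorem stmt_17 {Y : Type*} [Fintype Y] [DecidableEq Y] {k : ℕ}
    (A : Y → Fin k → ℕ) (θ : Fin k → ℝ) (Sj : Finset (Fin k))
    (hθpos : ∀ i, 0 < θ i) (hsum : ∑ i ∈ Sj, θ i = 1)
    (i₀ : Fin k) (hi₀ : i₀ ∈ Sj)
    (γ δ : Fin k → ℝ)
    (hsum' : ∀ t : ℝ, t + ∑ j ∈ Sj.erase i₀, (γ j * t + δ j) = 1)
    (E C : Finset Y) :
    ∃ p q : Polynomial ℝ,
      p.natDegree ≤ (E ∩ C).sup (fun y => ∑ j ∈ Sj, A y j)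
      ∧ q.natDegree ≤ C.sup (fun y => ∑ j ∈ Sj, A y j)
      ∧ (∀ t : ℝ,
          (∑ y ∈ E ∩ C, t ^ A y i₀ * (∏ j ∈ Sj.erase i₀, (γ j * t + δ j) ^ A y j)
              * ∏ i ∈ Sjᶜ, θ i ^ A y i) = p.eval t
          ∧ (∑ y ∈ C, t ^ A y i₀ * (∏ j ∈ Sj.erase i₀, (γ j * t + δ j) ^ A y j)
              * ∏ i ∈ Sjᶜ, θ i ^ A y i) = q.eval t
          ∧ (∑ y ∈ E ∩ C, t ^ A y i₀ * (∏ j ∈ Sj.erase i₀, (γ j * t + δ j) ^ A y j)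
              * ∏ i ∈ Sjᶜ, θ i ^ A y i)
            / (∑ y ∈ C, t ^ A y i₀ * (∏ j ∈ Sj.erase i₀, (γ j * t + δ j) ^ A y j)
              * ∏ i ∈ Sjᶜ, θ i ^ A y i)
            = p.eval t / q.eval t) := by
  obtain ⟨p, hp, hpe⟩ := aux_poly A θ Sj i₀ hi₀ γ δ (E ∩ C)
  obtain ⟨q, hq, hqe⟩ := aux_poly A θ Sj i₀ hi₀ γ δ C
  exact ⟨p, q, hp, hq, fun t => ⟨hpe t, hqe t, by rw [hpe t, hqe t]⟩⟩
end
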